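/- Conservation law under gradient flow: let L : ℝ^{l×d} × ℝ^{e×l} → ℝ be differentiable and invariant under all neuron rescalings, i.e. L(diag(α)·W¹, W²·diag(α)⁻¹) = L(W¹, W²) for every α ∈ ℝ^l with strictly positive entries. Let θ : ℝ → ℝ^{l×d} × ℝ^{e×l}, θ(t) = (W¹(t), W²(t)), be a differentiable curve satisfying the gradient flow equation θ'(t) = −∇L(θ(t)) for all t. Then for every hidden-neuron index k ∈ {1,…,l}, the function t ↦ ∑_{i=1}^{d} (W¹_{ki}(t))² − ∑_{j=1}^{e} (W²_{jk}(t))² is constant in t. -/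

import Mathlib

/-!
Rescaling the single neuron `k` by `s > 0` leaves `L` invariant, so differentiating at `s = 1`
shows that `dL` vanishes on the generator `(W¹ₖ, −W²_{·k})` of this rescaling:
`∑ᵢ W¹ₖᵢ ∂L/∂W¹ₖᵢ = ∑ⱼ W²ⱼₖ ∂L/∂W²ⱼₖ`. Along the gradient flow the time derivative of
`∑ᵢ (W¹ₖᵢ)² − ∑ⱼ (W²ⱼₖ)²` is `−2` times the difference of these two sums, hence zero.
-/

open Filter Topology

theorem HasDerivAt.fderiv_apply_eq_zero_of_eventually_const {𝕜 E F : Type*}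
    [NontriviallyNormedField 𝕜] [NormedAddCommGroup E] [NormedSpace 𝕜 E]
    [NormedAddCommGroup F] [NormedSpace 𝕜 F] {f : E → F} {γ : 𝕜 → E} {v : E} {s : 𝕜}
    (hγ : HasDerivAt γ v s) (hf : DifferentiableAt 𝕜 f (γ s))
    (hconst : ∀ᶠ s' in 𝓝 s, f (γ s') = f (γ s)) :
    fderiv 𝕜 f (γ s) v = 0 :=
  (hf.hasFDerivAt.comp_hasDerivAt s hγ).unique
    ((hasDerivAt_const s (f (γ s))).congr_of_eventuallyEq hconst)

section NeuronRescaling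

variable {ι κ μ : Type*}

noncomputable def rescale (α : ι → ℝ) (V : (ι → κ → ℝ) × (μ → ι → ℝ)) :
    (ι → κ → ℝ) × (μ → ι → ℝ) :=
  (fun k i => α k * V.1 k i, fun j k => V.2 j k * (α k)⁻¹)

def IsRescaleInvariant {β : Type*} (L : (ι → κ → ℝ) × (μ → ι → ℝ) → β) : Prop :=
  ∀ (α : ι → ℝ) V, (∀ k, 0 < α k) → L (rescale α V) = L V

variable [Fintype κ] [Fintype μ]

def neuronBalance (k : ι) (V : (ι → κ → ℝ) × (μ → ι → ℝ)) : ℝ :=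
  ∑ i, V.1 k i ^ 2 - ∑ j, V.2 j k ^ 2

theorem hasDerivAt_neuronBalance {θ : ℝ → (ι → κ → ℝ) × (μ → ι → ℝ)} {k : ι} {t : ℝ}
    {a : κ → ℝ} {b : μ → ℝ} (h₁ : ∀ i, HasDerivAt (fun t => (θ t).1 k i) (a i) t)
    (h₂ : ∀ j, HasDerivAt (fun t => (θ t).2 j k) (b j) t) :
    HasDerivAt (fun t => neuronBalance k (θ t))
      (2 * (∑ i, (θ t).1 k i * a i - ∑ j, (θ t).2 j k * b j)) t := by
  have hsq : ∀ {f : ℝ → ℝ} {f' : ℝ}, HasDerivAt f f' t →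
      HasDerivAt (fun t => f t ^ 2) (2 * (f t * f')) t := fun hf =>
    (hf.fun_pow 2).congr_deriv (by ring)
  rw [mul_sub, Finset.mul_sum, Finset.mul_sum]
  exact (HasDerivAt.fun_sum fun i _ => hsq (h₁ i)).sub (HasDerivAt.fun_sum fun j _ => hsq (h₂ j))

variable [DecidableEq ι]

theorem hasDerivAt_rescale_update_one [Fintype ι] (k : ι) (V : (ι → κ → ℝ) × (μ → ι → ℝ)) :
    HasDerivAt (fun s => rescale (Function.update 1 k s) V)
      (Pi.single k (V.1 k), fun j => Pi.single k (-V.2 j k)) 1 := by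
  refine .prodMk (hasDerivAt_pi.2 fun k' => hasDerivAt_pi.2 fun i => ?_)
    (hasDerivAt_pi.2 fun j => hasDerivAt_pi.2 fun k' => ?_)
  all_goals rcases eq_or_ne k' k with rfl | h
  · simpa [rescale] using (hasDerivAt_id (1 : ℝ)).mul_const (V.1 k' i)
  · simpa [rescale, h] using hasDerivAt_const (1 : ℝ) (V.1 k' i)
  · simpa [rescale] using (hasDerivAt_inv one_ne_zero).const_mul (V.2 j k')
  · simpa [rescale, h] using hasDerivAt_const (1 : ℝ) (V.2 j k')

variable [DecidableEq κ] [DecidableEq μ]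

theorem ContinuousLinearMap.apply_single_single_eq_sum
    (D : (ι → κ → ℝ) × (μ → ι → ℝ) →L[ℝ] ℝ) (k : ι) (w : κ → ℝ) (u : μ → ℝ) :
    D (Pi.single k w, fun j => Pi.single k (u j))
      = ∑ i, w i * D (Pi.single k (Pi.single i 1), 0)
        + ∑ j, u j * D (0, Pi.single j (Pi.single k 1)) := by
  have hdecomp : ((Pi.single k w, fun j => Pi.single k (u j)) : (ι → κ → ℝ) × (μ → ι → ℝ))
      = ∑ i, w i • (Pi.single k (Pi.single i 1), 0)
        + ∑ j, u j • (0, Pi.single j (Pi.single k 1)) := by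
    ext k' i
    · rcases eq_or_ne k' k with rfl | h <;>
        simp [Prod.fst_sum, Finset.sum_apply, Pi.single_apply, *]
    · rcases eq_or_ne i k with rfl | h <;>
        simp [Prod.snd_sum, Finset.sum_apply, Pi.single_apply, *]
  rw [hdecomp]
  simp only [map_add, map_sum, map_smul, smul_eq_mul]

theorem IsRescaleInvariant.sum_mul_fderiv_eq [Fintype ι]
    {L : (ι → κ → ℝ) × (μ → ι → ℝ) → ℝ} (hL : IsRescaleInvariant L)
    {V : (ι → κ → ℝ) × (μ → ι → ℝ)} (hdiff : DifferentiableAt ℝ L V) (k : ι) :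
    ∑ i, V.1 k i * fderiv ℝ L V (Pi.single k (Pi.single i 1), 0)
      = ∑ j, V.2 j k * fderiv ℝ L V (0, Pi.single j (Pi.single k 1)) := by
  have hV : rescale (Function.update 1 k 1) V = V := by simp [rescale]
  have hzero := (hasDerivAt_rescale_update_one k V).fderiv_apply_eq_zero_of_eventually_const
    (hV ▸ hdiff) <| by
      rw [hV]
      filter_upwards [Ioi_mem_nhds one_pos] with s hs
      exact hL _ V (Function.forall_update_iff _ (p := fun _ y => 0 < y) |>.2
        ⟨hs, fun _ _ => one_pos⟩)
  rw [hV, ContinuousLinearMap.apply_single_single_eq_sum] at hzero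
  simp only [neg_mul, Finset.sum_neg_distrib] at hzero
  linarith

end NeuronRescaling

/-- Conservation law under gradient flow. If `L` is differentiable
and invariant under all neuron rescalings, and `t ↦ (W¹(t), W²(t))` solves the
gradient flow equation `θ' = −∇L(θ)` (stated coordinate-wise: the derivative of
each weight is minus the corresponding partial derivative of `L`), then for each
hidden neuron `k` the quantity `∑ᵢ (W¹_{ki})² − ∑ⱼ (W²_{jk})²` is constant in `t`. -/
theorem gradient_flow_conserves_neuron_balance (l d e : ℕ)
    (L : ((Fin l → Fin d → ℝ) × (Fin e → Fin l → ℝ)) → ℝ)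
    (hdiff : Differentiable ℝ L)
    (hinv : ∀ (V1 : Fin l → Fin d → ℝ) (V2 : Fin e → Fin l → ℝ) (α : Fin l → ℝ),
      (∀ k, 0 < α k) →
      L (fun k i => α k * V1 k i, fun j k => V2 j k * (α k)⁻¹) = L (V1, V2))
    (W1 : ℝ → Fin l → Fin d → ℝ) (W2 : ℝ → Fin e → Fin l → ℝ)
    (hflow1 : ∀ (t : ℝ) (k : Fin l) (i : Fin d),
      HasDerivAt (fun t => W1 t k i)
        (-(fderiv ℝ L (W1 t, W2 t) (Pi.single k (Pi.single i (1 : ℝ)), 0))) t)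
    (hflow2 : ∀ (t : ℝ) (j : Fin e) (k : Fin l),
      HasDerivAt (fun t => W2 t j k)
        (-(fderiv ℝ L (W1 t, W2 t) (0, Pi.single j (Pi.single k (1 : ℝ))))) t)
    (k : Fin l) (t t' : ℝ) :
    ∑ i, (W1 t k i) ^ 2 - ∑ j, (W2 t j k) ^ 2
      = ∑ i, (W1 t' k i) ^ 2 - ∑ j, (W2 t' j k) ^ 2 := by
  have hL : IsRescaleInvariant L := fun α V hα => hinv V.1 V.2 α hα
  have hconst : ∀ s, HasDerivAt (fun t => neuronBalance k (W1 t, W2 t)) 0 s := fun s => by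
    convert hasDerivAt_neuronBalance (θ := fun t => (W1 t, W2 t)) (hflow1 s k) (hflow2 s · k)
      using 1
    simp only [mul_neg, Finset.sum_neg_distrib]
    linear_combination 2 * hL.sum_mul_fderiv_eq (hdiff (W1 s, W2 s)) k
  exact is_const_of_deriv_eq_zero (fun s => (hconst s).differentiableAt)
    (fun s => (hconst s).deriv) t t'
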